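/- Let F be a field of characteristic 2, K = F((X)) the field of formal Laurent series with X-adic valuation v_X. Let φ be an anisotropic quadratic form over F of dimension n, and let φ_K denote its base change to K. If ξ = (ξ₁,…,ξₙ) ∈ Kⁿ is nonzero and a = φ_K(ξ), then v_X(a) = 2·min{ v_X(ξᵢ) : 1 ≤ i ≤ n, ξᵢ ≠ 0 }. -/

import Mathlib

/-!
Background definitions for quadratic forms over fields of characteristic 2,
following the conventions of "Isotropy of quadratic forms over function fields
in characteristic 2".  A quadratic form of dimension `n` over a commutative ring
`R` is represented by a coefficient matrix `c : ι → ι → R` (`ι` a finite index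
type), the associated quadratic map being `x ↦ ∑ i j, c i j * x i * x j`; every
quadratic form on a finite-dimensional vector space (a map satisfying
`φ(av) = a²φ(v)` whose polar form is bilinear) arises this way.
-/

open scoped BigOperators Pointwise Classical

namespace QF2

variable {R S : Type*} [CommRing R] [CommRing S] {ι κ : Type} [Fintype ι] [Fintype κ]

/-- The value at `x` of the quadratic form with coefficient matrix `c`, namely
`∑ i j, c i j * x i * x j`. -/
def eval (c : ι → ι → R) (x : ι → R) : R := ∑ i, ∑ j, c i j * x i * x j

/-- The polar form `b(x,y) = q(x+y) - q(x) - q(y)` of the quadratic form `c`. -/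
def polar (c : ι → ι → R) (x y : ι → R) : R := ∑ i, ∑ j, c i j * (x i * y j + x j * y i)

/-- A quadratic form is isotropic if it vanishes on a nonzero vector. -/
def IsIsotropic (c : ι → ι → R) : Prop := ∃ x : ι → R, x ≠ 0 ∧ eval c x = 0

/-- Anisotropic: not isotropic. -/
abbrev IsAnisotropic (c : ι → ι → R) : Prop := ¬ IsIsotropic c

/-- Base change of a quadratic form along a ring homomorphism. -/
def map (σ : R →+* S) (c : ι → ι → R) : ι → ι → S := fun i j => σ (c i j)

/-- Quasilinear (totally singular): the polar form vanishes identically. -/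
def IsQuasilinear (c : ι → ι → R) : Prop := ∀ x y : ι → R, polar c x y = 0

/-- Nondefective (quasilinear index `i_d = 0`): no nonzero vector of the radical of the
polar form is isotropic. -/
def IsNondefective (c : ι → ι → R) : Prop :=
  ∀ x : ι → R, (∀ y, polar c x y = 0) → eval c x = 0 → x = 0

/-- `d` is isometric to `c`. -/
def Isometric (c : ι → ι → R) (d : κ → κ → R) : Prop :=
  ∃ g : (κ → R) ≃ₗ[R] (ι → R), ∀ x, eval d x = eval c (g x)

/-- `D_R^*(c)`: the set of nonzero represented elements. -/
def reps (c : ι → ι → R) : Set R := {a | a ≠ 0 ∧ ∃ x : ι → R, eval c x = a}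

/-- `D_R^*(c)^m`: products of `m` nonzero represented elements. -/
def repsPow (c : ι → ι → R) (m : ℕ) : Set R :=
  {a | ∃ v : Fin m → R, (∀ k, v k ∈ reps c) ∧ a = ∏ k, v k}

/-- The multiplicative subgroup of `F^*` generated by a set `s` of nonzero elements,
realized as a subset of `F` (products of elements of `s` and their inverses). -/
def genBy {F : Type*} [Field F] (s : Set F) : Set F :=
  ↑(Submonoid.closure (s ∪ Inv.inv '' s))

/-- `⟨D_F^*(c)⟩`: the subgroup generated by the nonzero represented elements. -/
def genGroup {F : Type*} [Field F] (c : ι → ι → F) : Set F := genBy (reps c)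

/-- `⟨D_F^*(c)²⟩`. -/
def genGroup2 {F : Type*} [Field F] (c : ι → ι → F) : Set F := genBy (repsPow c 2)

/-- The scaled quadratic form `a·c`. -/
def smulQF (a : R) (c : ι → ι → R) : ι → ι → R := fun i j => a * c i j

/-- Orthogonal sum of two quadratic forms. -/
def orthSum (c : ι → ι → R) (d : κ → κ → R) : (ι ⊕ κ) → (ι ⊕ κ) → R
  | Sum.inl i, Sum.inl j => c i j
  | Sum.inr i, Sum.inr j => d i j
  | _, _ => 0

lemma eval_add (c : ι → ι → R) (x y : ι → R) :
    eval c (x + y) = eval c x + eval c y + polar c x y := by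
  unfold eval polar
  rw [← Finset.sum_add_distrib, ← Finset.sum_add_distrib]
  refine Finset.sum_congr rfl fun i _ => ?_
  rw [← Finset.sum_add_distrib, ← Finset.sum_add_distrib]
  refine Finset.sum_congr rfl fun j _ => ?_
  simp only [Pi.add_apply]; ring

lemma polar_add_left (c : ι → ι → R) (x x' y : ι → R) :
    polar c (x + x') y = polar c x y + polar c x' y := by
  unfold polar
  rw [← Finset.sum_add_distrib]
  refine Finset.sum_congr rfl fun i _ => ?_
  rw [← Finset.sum_add_distrib]
  refine Finset.sum_congr rfl fun j _ => ?_
  simp only [Pi.add_apply]; ring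

lemma polar_smul_left (c : ι → ι → R) (a : R) (x y : ι → R) :
    polar c (a • x) y = a * polar c x y := by
  unfold polar
  rw [Finset.mul_sum]
  refine Finset.sum_congr rfl fun i _ => ?_
  rw [Finset.mul_sum]
  refine Finset.sum_congr rfl fun j _ => ?_
  simp only [Pi.smul_apply, smul_eq_mul]; ring

lemma eval_smul (c : ι → ι → R) (a : R) (x : ι → R) :
    eval c (a • x) = a ^ 2 * eval c x := by
  unfold eval
  rw [Finset.mul_sum]
  refine Finset.sum_congr rfl fun i _ => ?_
  rw [Finset.mul_sum]
  refine Finset.sum_congr rfl fun j _ => ?_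
  simp only [Pi.smul_apply, smul_eq_mul]; ring

/-- The defect of a quadratic form: the submodule of isotropic vectors lying in the
radical of the polar form. -/
def defectSubmodule (c : ι → ι → R) : Submodule R (ι → R) where
  carrier := {x | (∀ y, polar c x y = 0) ∧ eval c x = 0}
  zero_mem' := by
    constructor
    · intro y; unfold polar; simp
    · unfold eval; simp
  add_mem' := by
    rintro x x' ⟨hx1, hx2⟩ ⟨hx1', hx2'⟩
    refine ⟨fun y => ?_, ?_⟩
    · rw [polar_add_left, hx1 y, hx1' y, add_zero]
    · rw [eval_add, hx2, hx2', hx1 x', add_zero, add_zero]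
  smul_mem' := by
    rintro a x ⟨hx1, hx2⟩
    refine ⟨fun y => ?_, ?_⟩
    · rw [polar_smul_left, hx1 y, mul_zero]
    · rw [eval_smul, hx2, mul_zero]

/-- The quasilinear index (defect) `i_d` of a quadratic form. -/
noncomputable def defectIndex (c : ι → ι → R) : ℕ :=
  Module.finrank R (defectSubmodule c)

/-- The total isotropy index `i_t`: the dimension of a maximal totally isotropic
subspace. -/
noncomputable def totalIndex (c : ι → ι → R) : ℕ :=
  sSup {m | ∃ W : Submodule R (ι → R), (∀ x ∈ W, eval c x = 0) ∧ Module.finrank R W = m}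

/-- The Witt index `i_W = i_t - i_d`. -/
noncomputable def wittIndex (c : ι → ι → R) : ℕ := totalIndex c - defectIndex c

variable {F : Type u} [Field F]

/-- The homogeneous quadratic polynomial `φ(X_1, …, X_n)` attached to a quadratic form. -/
noncomputable def poly (c : ι → ι → F) : MvPolynomial ι F :=
  ∑ i, ∑ j, MvPolynomial.C (c i j) * (MvPolynomial.X i * MvPolynomial.X j)

/-- The canonical map from `F` to the total fraction ring of `A/(f)`; when `f` is
irreducible, the target is the function field `F(f)`. -/
noncomputable def ffHom {A : Type*} [CommRing A] (σ : F →+* A) (f : A) :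
    F →+* FractionRing (A ⧸ Ideal.span {f}) :=
  (algebraMap (A ⧸ Ideal.span {f}) (FractionRing (A ⧸ Ideal.span {f}))).comp
    ((Ideal.Quotient.mk (Ideal.span {f})).comp σ)

/-- The canonical map from `R` into (the total fraction ring of) `R[X_i : i ∈ κ]`;
for a field this is the inclusion into the rational function field `F(X_i : i ∈ κ)`. -/
noncomputable def ratHom (κ : Type) (R : Type*) [CommRing R] :
    R →+* FractionRing (MvPolynomial κ R) :=
  (algebraMap (MvPolynomial κ R) (FractionRing (MvPolynomial κ R))).comp MvPolynomial.C

/-- The canonical map from `F` into the rational function field `F(X)`. -/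
noncomputable def ratHom1 (F : Type u) [Field F] : F →+* FractionRing (Polynomial F) :=
  (algebraMap (Polynomial F) (FractionRing (Polynomial F))).comp Polynomial.C

/-- `φ_{F(ψ)}` is isotropic, where `F(ψ)` is the function field of the quadratic form `ψ`.
When the polynomial of `ψ` is irreducible this is the quotient field of `F[X]/(ψ(X))`;
otherwise (`ψ ≅ ⟨a⟩`, `ψ ≅ ℍ`, or degenerate defective cases) `F(ψ)` is a purely
transcendental extension of `F`, over which isotropy is equivalent to isotropy over `F`. -/
def IsotropicOverFunField (c : ι → ι → F) (d : κ → κ → F) : Prop :=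
  (Irreducible (poly d) → IsIsotropic (map (ffHom MvPolynomial.C (poly d)) c)) ∧
  (¬ Irreducible (poly d) → IsIsotropic c)

/-- Stable birational equivalence of (nondefective) quadratic forms:
`φ_{F(ψ)}` and `ψ_{F(φ)}` are both isotropic. -/
def StbEquiv (c : ι → ι → F) (d : κ → κ → F) : Prop :=
  IsotropicOverFunField c d ∧ IsotropicOverFunField d c

/-- The leading coefficient of a multivariate polynomial with respect to the
lexicographic ordering on monomials. -/
noncomputable def lexLC {l : ℕ} {F : Type*} [CommSemiring F] (f : MvPolynomial (Fin l) F) : F :=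
  if h : f = 0 then 0
  else f.coeff (ofLex ((f.support.image (toLex : (Fin l →₀ ℕ) → Lex (Fin l →₀ ℕ))).max'
    (Finset.Nonempty.image (MvPolynomial.support_nonempty.mpr h) _)))

/-- The coefficient matrix of the tensor product `π ⊗ φ` of the bilinear Pfister form
`π = ⟨⟨a 1, …, a n⟩⟩_b` with the quadratic form `c` (with respect to the standard basis,
`π ⊗ φ ≅ ⊥_{S ⊆ {1,…,n}} (∏_{i ∈ S} a i) φ`). -/
def pfisterMul {n : ℕ} (a : Fin n → R) (c : ι → ι → R) :
    ((Fin n → Bool) × ι) → ((Fin n → Bool) × ι) → R :=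
  fun p q =>
    if p.1 = q.1 then (∏ i, if p.1 i then a i else 1) * c p.2 q.2 else 0

/-!
Let `m` be the least order of a nonzero `ξ i`. Then `ξ = X^m η` for a vector `η` of power
series whose constant terms `η(0)` are the coefficients of `X^m` in the `ξ i`, not all zero.
Hence `φ_K(ξ) = X^{2m} φ(η)`, and the constant term of `φ(η)` is `φ(η(0)) ≠ 0` because `φ` is
anisotropic, so `v_X(φ_K(ξ)) = 2m`.
-/

end QF2

namespace LaurentSeries

open HahnSeries PowerSeries

variable {R : Type*}

section Semiring

variable [Semiring R]

theorem coeff_single_mul_ofPowerSeries_self (m : ℤ) (g : R⟦X⟧) :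
    (single m 1 * ofPowerSeries ℤ R g).coeff m = constantCoeff g := by
  rw [coeff_single_mul, sub_self, one_mul, ← Nat.cast_zero, ofPowerSeries_apply_coeff,
    coeff_zero_eq_constantCoeff_apply]

theorem single_mul_ofPowerSeries_ne_zero (m : ℤ) {g : R⟦X⟧} (hg : constantCoeff g ≠ 0) :
    single m 1 * ofPowerSeries ℤ R g ≠ 0 :=
  ne_zero_of_coeff_ne_zero (coeff_single_mul_ofPowerSeries_self m g ▸ hg)

theorem order_single_mul_ofPowerSeries (m : ℤ) {g : R⟦X⟧} (hg : constantCoeff g ≠ 0) :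
    (single m 1 * ofPowerSeries ℤ R g).order = m := by
  have hcoeff := coeff_single_mul_ofPowerSeries_self m g ▸ hg
  refine le_antisymm (order_le_of_coeff_ne_zero hcoeff)
    ((le_order_iff_forall (ne_zero_of_coeff_ne_zero hcoeff)).2 fun j hj => ?_)
  rw [coeff_single_mul, coeff_coe, if_pos (by omega), mul_zero]

theorem exists_single_mul_ofPowerSeries_eq {f : R⸨X⸩} {m : ℤ} (hf : ∀ p < m, f.coeff p = 0) :
    ∃ g : R⟦X⟧, single m 1 * ofPowerSeries ℤ R g = f ∧ constantCoeff g = f.coeff m := by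
  refine ⟨mk fun n => f.coeff (m + n), ?_, by simp [← coeff_zero_eq_constantCoeff_apply]⟩
  ext k
  rw [coeff_single_mul, one_mul, coeff_coe]
  split_ifs with hk
  · exact (hf k (by omega)).symm
  · rw [coeff_mk, Int.natAbs_of_nonneg (by omega), add_sub_cancel]

end Semiring

theorem exists_order_le_of_ne_zero [Zero R] {ι : Type*} [Fintype ι] {ξ : ι → R⸨X⸩} (hξ : ξ ≠ 0) :
    ∃ i, ξ i ≠ 0 ∧ ∀ j, ξ j ≠ 0 → (ξ i).order ≤ (ξ j).order := by
  classical
  obtain ⟨i₀, hi₀⟩ := Function.ne_iff.mp hξ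
  obtain ⟨i, hi, hmin⟩ :=
    Finset.exists_min_image {j | ξ j ≠ 0} (fun j => (ξ j).order) ⟨i₀, by simpa using hi₀⟩
  exact ⟨i, by simpa using hi, fun j hj => hmin j (by simpa using hj)⟩

end LaurentSeries

namespace QF2

open HahnSeries PowerSeries

variable {R S : Type*} [CommRing R] [CommRing S] {ι : Type} [Fintype ι]

theorem eval_map (σ : R →+* S) (c : ι → ι → R) (x : ι → R) :
    eval (map σ c) (fun i => σ (x i)) = σ (eval c x) := by
  simp only [eval, map, map_sum, map_mul]

theorem constantCoeff_eval_map_C (c : ι → ι → R) (g : ι → R⟦X⟧) :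
    constantCoeff (eval (map PowerSeries.C c) g) = eval c fun i => constantCoeff (g i) := by
  have hc : map constantCoeff (map PowerSeries.C c) = c := funext₂ fun _ _ => constantCoeff_C _
  rw [← eval_map, hc]

theorem eval_map_algebraMap_single_mul_ofPowerSeries (c : ι → ι → R) (m : ℤ) (g : ι → R⟦X⟧) :
    eval (map (algebraMap R (LaurentSeries R)) c) (fun i => single m 1 * ofPowerSeries ℤ R (g i)) =
      single (2 * m) 1 * ofPowerSeries ℤ R (eval (map PowerSeries.C c) g) := by
  have hsmul : (fun i => single m 1 * ofPowerSeries ℤ R (g i)) =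
      single m (1 : R) • fun i => ofPowerSeries ℤ R (g i) := rfl
  rw [hsmul, eval_smul, single_pow, one_pow, nsmul_eq_mul, Nat.cast_ofNat, ← eval_map]
  rfl

theorem stmt2_general {F : Type*} [Field F] {ι : Type} [Fintype ι]
    (c : ι → ι → F) (han : IsAnisotropic c)
    (ξ : ι → LaurentSeries F) (hξ : ξ ≠ 0)
    (a : LaurentSeries F) (ha : a = eval (map (algebraMap F (LaurentSeries F)) c) ξ) :
    a ≠ 0 ∧ ∃ i, ξ i ≠ 0 ∧ (∀ j, ξ j ≠ 0 → (ξ i).order ≤ (ξ j).order) ∧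
      a.order = 2 * (ξ i).order := by
  obtain ⟨i, hξi, hmin⟩ := LaurentSeries.exists_order_le_of_ne_zero hξ
  have hlow : ∀ j, ∀ p < (ξ i).order, (ξ j).coeff p = 0 := fun j p hp => by
    by_cases hj : ξ j = 0
    · simp [hj]
    · exact coeff_eq_zero_of_lt_order (hp.trans_le (hmin j hj))
  choose η hξη hη using fun j => LaurentSeries.exists_single_mul_ofPowerSeries_eq (hlow j)
  have hu : (fun j => constantCoeff (η j)) ≠ 0 := fun h => hξi (by simpa [hη] using congrFun h i)
  have hq : constantCoeff (eval (map PowerSeries.C c) η) ≠ 0 := by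
    rw [constantCoeff_eval_map_C]
    exact fun h => han ⟨_, hu, h⟩
  have ha' : a = single (2 * (ξ i).order) 1 * ofPowerSeries ℤ F (eval (map PowerSeries.C c) η) := by
    rw [ha, ← eval_map_algebraMap_single_mul_ofPowerSeries, funext hξη]
  exact ⟨ha' ▸ LaurentSeries.single_mul_ofPowerSeries_ne_zero _ hq, i, hξi, hmin,
    ha' ▸ LaurentSeries.order_single_mul_ofPowerSeries _ hq⟩

/-- Let `F` be a field of characteristic 2 and `K = F((X))` the field
of formal Laurent series with `X`-adic valuation `v_X` (the order of a Laurent series).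
Let `φ` be an anisotropic quadratic form over `F` and `φ_K` its base change to `K`.
If `ξ` is a nonzero vector over `K` and `a = φ_K(ξ)`, then
`v_X(a) = 2·min{v_X(ξ i) : ξ i ≠ 0}`. -/
theorem stmt2 {F : Type*} [Field F] [CharP F 2] {ι : Type} [Fintype ι]
    (c : ι → ι → F) (han : IsAnisotropic c)
    (ξ : ι → LaurentSeries F) (hξ : ξ ≠ 0)
    (a : LaurentSeries F) (ha : a = eval (map (algebraMap F (LaurentSeries F)) c) ξ) :
    a ≠ 0 ∧ ∃ i, ξ i ≠ 0 ∧ (∀ j, ξ j ≠ 0 → (ξ i).order ≤ (ξ j).order) ∧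
      a.order = 2 * (ξ i).order :=
  stmt2_general c han ξ hξ a ha

end QF2
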